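/- arXiv:2012.00479 — 3 statements merged into one kernel-verified Lean document; each statement's English description precedes it below -/
import Mathlib

section
/- Let A, B be Hermitian n×n matrices with B positive semidefinite and (A,B) regular. Then the pencil (A,B) has a defective infinite eigenvalue (i.e., there exist nonzero x, y with Bx = 0 and By = Ax) if and only if the Hermitian matrix N^H A N is singular, where N is a matrix whose columns form a basis of the null space of B. -/
/-!
The infinite eigenvalue is defective iff some `x = N v ≠ 0` in `ker B` has `A x ∈ range B`.
Since `B` is Hermitian, `range B = (ker B)ᗮ`, and `A x ⊥ ker B` means exactly `Nᴴ A N v = 0`.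
-/

open Matrix ComplexOrder

namespace Matrix

variable {𝕜 m k : Type*} [RCLike 𝕜] [Fintype m] [DecidableEq m] [Fintype k]

theorem IsHermitian.exists_mulVec_eq_of_forall_ker {B : Matrix m m 𝕜} (hB : B.IsHermitian)
    {u : m → 𝕜} (hu : ∀ w, B *ᵥ w = 0 → star w ⬝ᵥ u = 0) : ∃ y, B *ᵥ y = u := by
  set T := toEuclideanLin B
  have hrange : LinearMap.range T = (LinearMap.ker T)ᗮ := by
    rw [← (isSymmetric_toEuclideanLin_iff.mpr hB).orthogonal_range,
      Submodule.orthogonal_orthogonal]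
  have hmem : WithLp.toLp 2 u ∈ LinearMap.range T := by
    rw [hrange, Submodule.mem_orthogonal]
    intro w hw
    have hBw : B *ᵥ w.ofLp = 0 := congrArg WithLp.ofLp hw
    simpa [EuclideanSpace.inner_eq_star_dotProduct, dotProduct_comm] using hu _ hBw
  obtain ⟨y, hy⟩ := hmem
  exact ⟨y.ofLp, congrArg WithLp.ofLp hy⟩

theorem IsHermitian.exists_mulVec_eq_iff_conjTranspose_mulVec_eq_zero {B : Matrix m m 𝕜}
    (hB : B.IsHermitian) {N : Matrix m k 𝕜} (hN : ∀ x, B *ᵥ x = 0 ↔ ∃ v, x = N *ᵥ v)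
    (u : m → 𝕜) : (∃ y, B *ᵥ y = u) ↔ Nᴴ *ᵥ u = 0 := by
  constructor
  · rintro ⟨y, rfl⟩
    have hBN : B * N = 0 := mulVec_injective <| funext fun v => by
      rw [← mulVec_mulVec, zero_mulVec]
      exact (hN _).mpr ⟨v, rfl⟩
    rw [mulVec_mulVec, ← hB.eq, ← conjTranspose_mul, hBN, conjTranspose_zero, zero_mulVec]
  · intro hNu
    refine hB.exists_mulVec_eq_of_forall_ker fun w hw => ?_
    obtain ⟨s, rfl⟩ := (hN w).mp hw
    rw [star_mulVec, ← dotProduct_mulVec, hNu, dotProduct_zero]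

end Matrix

theorem stmt3_general {n k : ℕ} (A B : Matrix (Fin n) (Fin n) ℂ)
    (hB : B.PosSemidef)
    (N : Matrix (Fin n) (Fin k) ℂ)
    (hNinj : ∀ v : Fin k → ℂ, N.mulVec v = 0 → v = 0)
    (hNspan : ∀ x : Fin n → ℂ, B.mulVec x = 0 ↔ ∃ v, x = N.mulVec v) :
    (∃ x y : Fin n → ℂ, x ≠ 0 ∧ B.mulVec x = 0 ∧ B.mulVec y = A.mulVec x) ↔
      (Nᴴ * A * N).det = 0 := by
  have hrange := hB.isHermitian.exists_mulVec_eq_iff_conjTranspose_mulVec_eq_zero hNspan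
  have hNAN (v : Fin k → ℂ) : (Nᴴ * A * N) *ᵥ v = Nᴴ *ᵥ (A *ᵥ (N *ᵥ v)) := by
    rw [mulVec_mulVec, mulVec_mulVec, Matrix.mul_assoc]
  rw [← exists_mulVec_eq_zero_iff]
  constructor
  · rintro ⟨x, y, hx, hBx, hBy⟩
    obtain ⟨v, rfl⟩ := (hNspan x).mp hBx
    exact ⟨v, fun hv => hx (by rw [hv, mulVec_zero]), hNAN v ▸ (hrange _).mp ⟨y, hBy⟩⟩
  · rintro ⟨v, hv, hNANv⟩
    obtain ⟨y, hy⟩ := (hrange _).mpr (hNAN v ▸ hNANv)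
    exact ⟨N *ᵥ v, y, mt (hNinj v) hv, (hNspan _).mpr ⟨v, rfl⟩, hy⟩

/-- For a regular Hermitian pencil (A,B) with B ⪰ 0, the pencil has a
defective infinite eigenvalue (∃ x ≠ 0, y with Bx = 0 and By = Ax) iff NᴴAN is
singular, where the columns of N form a basis of the null space of B. -/
theorem stmt3 {n k : ℕ} (A B : Matrix (Fin n) (Fin n) ℂ)
    (hA : A.IsHermitian) (hB : B.PosSemidef)
    (hreg : ∃ ω : ℂ, (A - ω • B).det ≠ 0)
    (N : Matrix (Fin n) (Fin k) ℂ)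
    (hNinj : ∀ v : Fin k → ℂ, N.mulVec v = 0 → v = 0)
    (hNspan : ∀ x : Fin n → ℂ, B.mulVec x = 0 ↔ ∃ v, x = N.mulVec v) :
    (∃ x y : Fin n → ℂ, x ≠ 0 ∧ B.mulVec x = 0 ∧ B.mulVec y = A.mulVec x) ↔
      (Nᴴ * A * N).det = 0 :=
  stmt3_general A B hB N hNinj hNspan
end

section
/- For any real μ ∈ {1,-1}, real α, real ω ≠ α, and even size k = 2s, the Hermitian matrix L = μ((α-ω)F_k + G_k) has inertia p₊(L) = s and p₋(L) = s, where F_k is the k×k anti-identity and G_k the k×k matrix with 1's in positions (i,j) with i+j = k. -/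
/-!
A nonsingular Hermitian matrix of size `2s` with a vanishing principal `s × s` block has
exactly `s` positive and `s` negative eigenvalues: the `s`-dimensional coordinate
subspace of the block is isotropic for the quadratic form `x ↦ xᴴ L x`, while the form is
definite on the span of the eigenvectors with positive (resp. negative) eigenvalues; the two
subspaces therefore meet trivially, so each sign occurs at most `s` times, and nonsingularity
rules out zero eigenvalues.

The matrix `μ((α-ω)F + G)` is anti-triangular with nonzero anti-diagonal `μ(α-ω)`, hence
nonsingular, and its lower right `s × s` block lies below the anti-diagonal.
-/

open Matrix

/-- The k×k anti-identity over ℝ (1-based: ones where i+j = k+1). -/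
def FmatR (k : ℕ) : Matrix (Fin k) (Fin k) ℝ :=
  Matrix.of fun i j => if (i : ℕ) + (j : ℕ) + 1 = k then 1 else 0

/-- The k×k shifted anti-identity over ℝ (1-based: ones where i+j = k). -/
def GmatR (k : ℕ) : Matrix (Fin k) (Fin k) ℝ :=
  Matrix.of fun i j => if (i : ℕ) + (j : ℕ) + 2 = k then 1 else 0

open scoped ComplexOrder

namespace Matrix

variable {n m k 𝕜 R : Type*} [Fintype n] [RCLike 𝕜]

lemma star_mulVec_dotProduct_mulVec_mulVec [Fintype m] (A : Matrix n n 𝕜) (B : Matrix n m 𝕜)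
    (y : m → 𝕜) : star (B *ᵥ y) ⬝ᵥ (A *ᵥ (B *ᵥ y)) = star y ⬝ᵥ ((Bᴴ * A * B) *ᵥ y) := by
  simp only [star_mulVec, dotProduct_mulVec, vecMul_vecMul, mulVec_mulVec, Matrix.mul_assoc]

/-- The form `x ↦ xᴴ A x` is definite on the column space of `B` and vanishes on that of `C`,
so the two column spaces meet trivially. -/
theorem card_add_card_le_of_posDef_of_isotropic [Fintype m] [Fintype k] {A : Matrix n n 𝕜}
    {B : Matrix n m 𝕜} {C : Matrix n k 𝕜} (hB : (Bᴴ * A * B).PosDef) (hC : Cᴴ * A * C = 0)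
    (hCinj : Function.Injective C.mulVec) :
    Fintype.card m + Fintype.card k ≤ Fintype.card n := by
  have hBinj : Function.Injective B.mulVec := by
    refine (injective_iff_map_eq_zero B.mulVecLin).mpr fun y hy => ?_
    by_contra hy0
    have hpos := hB.dotProduct_mulVec_pos hy0
    rw [← star_mulVec_dotProduct_mulVec_mulVec, ← mulVecLin_apply, hy] at hpos
    simp at hpos
  have hdisj : LinearMap.range B.mulVecLin ⊓ LinearMap.range C.mulVecLin = ⊥ := by
    refine (Submodule.eq_bot_iff _).mpr ?_
    rintro x ⟨⟨y, rfl⟩, ⟨z, hz⟩⟩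
    by_contra hx
    have hy : y ≠ 0 := by rintro rfl; simp at hx
    have hpos := hB.dotProduct_mulVec_pos hy
    simp only [mulVecLin_apply] at hz
    rw [← star_mulVec_dotProduct_mulVec_mulVec, ← hz, star_mulVec_dotProduct_mulVec_mulVec, hC]
      at hpos
    simp at hpos
  have hsum := Submodule.finrank_sup_add_finrank_inf_eq (LinearMap.range B.mulVecLin)
    (LinearMap.range C.mulVecLin)
  rw [hdisj, finrank_bot, add_zero, LinearMap.finrank_range_of_inj hBinj,
    LinearMap.finrank_range_of_inj hCinj, Module.finrank_fintype_fun_eq_card,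
    Module.finrank_fintype_fun_eq_card] at hsum
  rw [← hsum, ← Module.finrank_fintype_fun_eq_card 𝕜]
  exact Submodule.finrank_le _

lemma conjTranspose_one_submatrix_mul_mul [DecidableEq n] [Semiring R] [StarRing R]
    (A : Matrix n n R) (e : k → n) :
    ((1 : Matrix n n R).submatrix id e)ᴴ * A * (1 : Matrix n n R).submatrix id e =
      A.submatrix e e := by
  ext i j
  simp [mul_apply, one_apply]

omit [Fintype n] in
lemma mulVec_one_submatrix_injective [DecidableEq n] [Semiring R] [Fintype k] {e : k → n}
    (he : Function.Injective e) :
    Function.Injective ((1 : Matrix n n R).submatrix id e).mulVec := by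
  classical
  intro x y h
  funext j
  simpa [mulVec, dotProduct, one_apply, he.eq_iff] using congrFun h (e j)

theorem det_ne_zero_of_antitriangular [CommRing R] [NoZeroDivisors R] [Nontrivial R] {N : ℕ}
    {M : Matrix (Fin N) (Fin N) R} (hzero : ∀ i j : Fin N, N ≤ (i : ℕ) + j → M i j = 0)
    (hanti : ∀ i, M i i.rev ≠ 0) : M.det ≠ 0 := by
  have htri : (M.submatrix id Fin.revPerm).IsUpperTriangular := fun i j (hji : j < i) =>
    hzero _ _ (by simp only [id, Fin.revPerm_apply, Fin.val_rev]; omega)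
  have hdet := det_permute' Fin.revPerm M
  rw [det_of_isUpperTriangular htri] at hdet
  exact right_ne_zero_of_mul (hdet ▸ Finset.prod_ne_zero_iff.mpr fun i _ => hanti i)

namespace IsHermitian

variable [DecidableEq n] {A : Matrix n n 𝕜} (hA : A.IsHermitian)
include hA

lemma conjTranspose_mul_mul_eigenvectorUnitary_submatrix (p : n → Prop) :
    ((hA.eigenvectorUnitary : Matrix n n 𝕜).submatrix id (Subtype.val : {i // p i} → n))ᴴ * A *
        (hA.eigenvectorUnitary : Matrix n n 𝕜).submatrix id Subtype.val =
      diagonal fun i : {i // p i} => (hA.eigenvalues i : 𝕜) := by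
  have h := hA.conjStarAlgAut_star_eigenvectorUnitary
  rw [Unitary.conjStarAlgAut_star_apply] at h
  calc _ = (star (hA.eigenvectorUnitary : Matrix n n 𝕜) * A * hA.eigenvectorUnitary).submatrix
          Subtype.val Subtype.val := by
        rw [submatrix_mul _ _ _ _ _ Function.bijective_id,
          submatrix_mul _ _ _ _ _ Function.bijective_id, submatrix_id_id, star_eq_conjTranspose,
          conjTranspose_submatrix]
    _ = _ := by rw [h, submatrix_diagonal _ _ Subtype.val_injective]; rfl

theorem card_pos_eigenvalues_add_card_le [Fintype k] {C : Matrix n k 𝕜} (hC : Cᴴ * A * C = 0)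
    (hCinj : Function.Injective C.mulVec) :
    Fintype.card {i // 0 < hA.eigenvalues i} + Fintype.card k ≤ Fintype.card n := by
  refine card_add_card_le_of_posDef_of_isotropic
    (B := (hA.eigenvectorUnitary : Matrix n n 𝕜).submatrix id Subtype.val) ?_ hC hCinj
  rw [hA.conjTranspose_mul_mul_eigenvectorUnitary_submatrix]
  exact posDef_diagonal_iff.mpr fun i => RCLike.ofReal_pos.mpr i.2

theorem card_neg_eigenvalues_add_card_le [Fintype k] {C : Matrix n k 𝕜} (hC : Cᴴ * A * C = 0)
    (hCinj : Function.Injective C.mulVec) :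
    Fintype.card {i // hA.eigenvalues i < 0} + Fintype.card k ≤ Fintype.card n := by
  refine card_add_card_le_of_posDef_of_isotropic (A := -A)
    (B := (hA.eigenvectorUnitary : Matrix n n 𝕜).submatrix id Subtype.val) ?_ (by simp [hC]) hCinj
  rw [Matrix.mul_neg, Matrix.neg_mul, hA.conjTranspose_mul_mul_eigenvectorUnitary_submatrix,
    diagonal_neg]
  exact posDef_diagonal_iff.mpr fun i => by simpa using i.2

theorem card_pos_eigenvalues_add_card_neg_eigenvalues (hdet : A.det ≠ 0) :
    Fintype.card {i // 0 < hA.eigenvalues i} + Fintype.card {i // hA.eigenvalues i < 0} =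
      Fintype.card n := by
  have hne : ∀ i, hA.eigenvalues i ≠ 0 := fun i h => hdet <| by
    rw [hA.det_eq_prod_eigenvalues]
    exact Finset.prod_eq_zero (Finset.mem_univ i) (by simp [h])
  rw [← Fintype.card_subtype_or_disjoint _ _ fun p hpos hneg i hi => (hpos i hi).asymm (hneg i hi)]
  exact Fintype.card_congr (Equiv.subtypeUnivEquiv fun i => (hne i).symm.lt_or_gt)

theorem card_eigenvalues_eq_of_submatrix_eq_zero [Fintype k] (hdet : A.det ≠ 0) {e : k → n}
    (he : Function.Injective e) (hzero : A.submatrix e e = 0)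
    (hcard : Fintype.card n = 2 * Fintype.card k) :
    Fintype.card {i // 0 < hA.eigenvalues i} = Fintype.card k ∧
      Fintype.card {i // hA.eigenvalues i < 0} = Fintype.card k := by
  rw [← conjTranspose_one_submatrix_mul_mul] at hzero
  have hpos := hA.card_pos_eigenvalues_add_card_le hzero (mulVec_one_submatrix_injective he)
  have hneg := hA.card_neg_eigenvalues_add_card_le hzero (mulVec_one_submatrix_injective he)
  have hsum := hA.card_pos_eigenvalues_add_card_neg_eigenvalues hdet
  omega

end IsHermitian

theorem IsHermitian.card_eigenvalues_eq_of_antitriangular {s : ℕ}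
    {A : Matrix (Fin (2 * s)) (Fin (2 * s)) 𝕜} (hA : A.IsHermitian)
    (hzero : ∀ i j : Fin (2 * s), 2 * s ≤ (i : ℕ) + j → A i j = 0) (hanti : ∀ i, A i i.rev ≠ 0) :
    Fintype.card {i // 0 < hA.eigenvalues i} = s ∧
      Fintype.card {i // hA.eigenvalues i < 0} = s := by
  let e : Fin s → Fin (2 * s) := fun j => ⟨s + j, by have := j.2; omega⟩
  have he : Function.Injective e := fun i j h => Fin.ext (by simpa [e] using congrArg Fin.val h)
  have hblock : A.submatrix e e = 0 := by
    ext i j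
    exact hzero _ _ (by simp only [e]; omega)
  simpa using hA.card_eigenvalues_eq_of_submatrix_eq_zero
    (det_ne_zero_of_antitriangular hzero hanti) he hblock (by simp)

end Matrix

lemma smul_FmatR_add_GmatR_apply_of_le (c : ℝ) {N : ℕ} {i j : Fin N} (h : N ≤ (i : ℕ) + j) :
    (c • FmatR N + GmatR N) i j = 0 := by
  simp [FmatR, GmatR, show (i : ℕ) + j + 1 ≠ N by omega, show (i : ℕ) + j + 2 ≠ N by omega]

lemma smul_FmatR_add_GmatR_apply_rev (c : ℝ) {N : ℕ} (i : Fin N) :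
    (c • FmatR N + GmatR N) i i.rev = c := by
  have h1 : (i : ℕ) + (N - (i + 1)) + 1 = N := by omega
  have h2 : (i : ℕ) + (N - (i + 1)) + 2 ≠ N := by omega
  simp [FmatR, GmatR, h1, h2]

/-- For μ ∈ {1,-1}, real α, real ω ≠ α, and even size k = 2s, the
Hermitian matrix L = μ((α-ω)F_k + G_k) has inertia p₊(L) = s = p₋(L). -/
theorem stmt10 (s : ℕ) (μ α ω : ℝ) (hμ : μ = 1 ∨ μ = -1) (hω : ω ≠ α)
    (L : Matrix (Fin (2 * s)) (Fin (2 * s)) ℝ)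
    (hLdef : L = μ • ((α - ω) • FmatR (2 * s) + GmatR (2 * s)))
    (hL : L.IsHermitian) :
    Fintype.card {i // 0 < hL.eigenvalues i} = s ∧
      Fintype.card {i // hL.eigenvalues i < 0} = s := by
  have hμ0 : μ ≠ 0 := by rcases hμ with rfl | rfl <;> norm_num
  refine hL.card_eigenvalues_eq_of_antitriangular (fun i j hij => ?_) (fun i => ?_)
  · rw [hLdef, Matrix.smul_apply, smul_FmatR_add_GmatR_apply_of_le _ hij, smul_zero]
  · rw [hLdef, Matrix.smul_apply, smul_FmatR_add_GmatR_apply_rev, smul_eq_mul]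
    exact mul_ne_zero hμ0 (sub_ne_zero.mpr hω.symm)
end

section
/- Let A(γ), B be Hermitian with B invertible, and suppose ω(γ) ≠ 0 and y(γ) are a differentiable eigenvalue/eigenvector family of the pencil (A(γ), B), i.e., A(γ)y(γ) = ω(γ) B y(γ), normalized so that y(γ)^H A(γ) y(γ) = 1. Then ω'(γ) = ω(γ) · y(γ)^H A'(γ) y(γ). -/
/-!
Differentiate the two identities `yᴴ A y = 1` and `ω · yᴴ B y = 1` (the second is the first after
substituting `A y = ω B y`). Since `A`, `B` are Hermitian and `ω` is real, the eigen-equation also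
holds on the left, `yᴴ A = ω yᴴ B`, so the first derivative gives `ω (yᴴ B y)' = -yᴴ A' y`, and the
second gives `ω' (yᴴ B y) = -ω (yᴴ B y)' = yᴴ A' y`; multiplying by `ω` yields `ω' = ω yᴴ A' y`.
-/

open Matrix

theorem hasDerivAt_star_dotProduct_mulVec {𝕜 ι : Type*} [RCLike 𝕜] [Fintype ι]
    {M : ℝ → Matrix ι ι 𝕜} {M' : Matrix ι ι 𝕜} {y : ℝ → ι → 𝕜} {y' : ι → 𝕜} {t : ℝ}
    (hM : ∀ i j, HasDerivAt (fun s => M s i j) (M' i j) t)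
    (hy : ∀ i, HasDerivAt (fun s => y s i) (y' i) t) :
    HasDerivAt (fun s => star (y s) ⬝ᵥ M s *ᵥ y s)
      (star y' ⬝ᵥ M t *ᵥ y t + star (y t) ⬝ᵥ M' *ᵥ y t + star (y t) ⬝ᵥ M t *ᵥ y') t := by
  have hterm : ∀ i j, HasDerivAt (fun s => star (y s i) * (M s i j * y s j))
      (star (y' i) * (M t i j * y t j) + star (y t i) * (M' i j * y t j + M t i j * y' j)) t :=
    fun i j => (hy i).star.mul ((hM i j).mul (hy j))
  have hsum := HasDerivAt.fun_sum (u := Finset.univ) fun i _ =>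
    HasDerivAt.fun_sum (u := Finset.univ) fun j _ => hterm i j
  simp only [← Finset.mul_sum, mul_add, Finset.sum_add_distrib] at hsum
  refine hsum.congr_deriv ?_
  simp only [dotProduct, mulVec, Pi.star_apply, Finset.mul_sum]
  ring

theorem Matrix.IsHermitian.star_dotProduct_mulVec_of_mulVec_eq_smul {ι : Type*} [Fintype ι]
    {A B : Matrix ι ι ℂ} (hA : A.IsHermitian) (hB : B.IsHermitian) {ω : ℝ} {v : ι → ℂ}
    (hv : A *ᵥ v = (ω : ℂ) • B *ᵥ v) (w : ι → ℂ) :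
    star v ⬝ᵥ A *ᵥ w = ω * (star v ⬝ᵥ B *ᵥ w) := by
  rw [dotProduct_mulVec, dotProduct_mulVec, ← hA.eq, ← hB.eq, ← star_mulVec, ← star_mulVec, hv,
    star_smul, smul_dotProduct, Complex.star_def, Complex.conj_ofReal, smul_eq_mul]

theorem stmt19_general {n : ℕ} (A : ℝ → Matrix (Fin n) (Fin n) ℂ)
    (B : Matrix (Fin n) (Fin n) ℂ)
    (hA : ∀ t, (A t).IsHermitian) (hB : B.IsHermitian)
    (ω : ℝ → ℝ)
    (y : ℝ → Fin n → ℂ)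
    (heig : ∀ t, (A t).mulVec (y t) = (ω t : ℂ) • B.mulVec (y t))
    (hnorm : ∀ t, star (y t) ⬝ᵥ (A t).mulVec (y t) = 1)
    (γ₀ : ℝ) (A' : Matrix (Fin n) (Fin n) ℂ) (ω' : ℝ) (y' : Fin n → ℂ)
    (hA' : ∀ i j, HasDerivAt (fun t => A t i j) (A' i j) γ₀)
    (hω' : HasDerivAt ω ω' γ₀)
    (hy' : ∀ i, HasDerivAt (fun t => y t i) (y' i) γ₀) :
    (ω' : ℂ) = ((ω γ₀ : ℝ) : ℂ) * (star (y γ₀) ⬝ᵥ A'.mulVec (y γ₀)) := by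
  have hωB : ∀ t, (ω t : ℂ) * (star (y t) ⬝ᵥ B *ᵥ y t) = 1 := fun t => by
    rw [← hnorm t, heig t, dotProduct_smul, smul_eq_mul]
  have hquadB' := hasDerivAt_star_dotProduct_mulVec (M := fun _ => B) (M' := 0)
    (fun i j => hasDerivAt_const γ₀ (B i j)) hy'
  rw [zero_mulVec, dotProduct_zero, add_zero] at hquadB'
  have hnorm' : star y' ⬝ᵥ A γ₀ *ᵥ y γ₀ + star (y γ₀) ⬝ᵥ A' *ᵥ y γ₀
      + star (y γ₀) ⬝ᵥ A γ₀ *ᵥ y' = 0 :=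
    (hasDerivAt_star_dotProduct_mulVec hA' hy').unique <| by
      simpa only [hnorm] using hasDerivAt_const γ₀ (1 : ℂ)
  have hωB' : (ω' : ℂ) * (star (y γ₀) ⬝ᵥ B *ᵥ y γ₀)
      + ω γ₀ * (star y' ⬝ᵥ B *ᵥ y γ₀ + star (y γ₀) ⬝ᵥ B *ᵥ y') = 0 :=
    (hω'.ofReal_comp.fun_mul hquadB').unique <| by simpa only [hωB] using hasDerivAt_const γ₀ (1 : ℂ)
  rw [heig, dotProduct_smul, smul_eq_mul,
    (hA γ₀).star_dotProduct_mulVec_of_mulVec_eq_smul hB (heig γ₀)] at hnorm'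
  linear_combination -(ω' : ℂ) * hωB γ₀ + ω γ₀ * hωB' - ω γ₀ * hnorm'

/-- For a differentiable family of eigenpairs A(γ)y(γ) = ω(γ)By(γ) of a
Hermitian pencil with B invertible, ω(γ) ≠ 0, normalized by y(γ)ᴴA(γ)y(γ) = 1, one has
ω'(γ) = ω(γ) · y(γ)ᴴ A'(γ) y(γ). -/
theorem stmt19 {n : ℕ} (A : ℝ → Matrix (Fin n) (Fin n) ℂ)
    (B : Matrix (Fin n) (Fin n) ℂ)
    (hA : ∀ t, (A t).IsHermitian) (hB : B.IsHermitian) (hBinv : IsUnit B.det)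
    (ω : ℝ → ℝ) (hω : ∀ t, ω t ≠ 0)
    (y : ℝ → Fin n → ℂ)
    (heig : ∀ t, (A t).mulVec (y t) = (ω t : ℂ) • B.mulVec (y t))
    (hnorm : ∀ t, star (y t) ⬝ᵥ (A t).mulVec (y t) = 1)
    (γ₀ : ℝ) (A' : Matrix (Fin n) (Fin n) ℂ) (ω' : ℝ) (y' : Fin n → ℂ)
    (hA' : ∀ i j, HasDerivAt (fun t => A t i j) (A' i j) γ₀)
    (hω' : HasDerivAt ω ω' γ₀)
    (hy' : ∀ i, HasDerivAt (fun t => y t i) (y' i) γ₀) :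
    (ω' : ℂ) = ((ω γ₀ : ℝ) : ℂ) * (star (y γ₀) ⬝ᵥ A'.mulVec (y γ₀)) :=
  stmt19_general A B hA hB ω y heig hnorm γ₀ A' ω' y' hA' hω' hy'
end
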